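/- For every family cs of finite subsets of an alphabet, α̂(γ̃(cs)) equals the subset-closure of cs: α̂(γ̃(cs)) = { C' | ∃ C ∈ cs, C' ⊆ C }. -/

import Mathlib

variable {S : Type*} [DecidableEq S]

/-- Π C: permutation words of the finite set C (each element exactly once). -/
def permWords (C : Finset S) : Set (List S) :=
  {w | ∀ a : S, w.count a = if a ∈ C then 1 else 0}

/-- γ(C) = ⋃_{C' ⊆ C} Π C'. -/
def conc (C : Finset S) : Set (List S) :=
  {w | ∃ C' : Finset S, C' ⊆ C ∧ w ∈ permWords C'}

/-- γ̃(cs) = ⋃_{C ∈ cs} γ(C). -/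
def concTilde (cs : Set (Finset S)) : Set (List S) :=
  ⋃ C ∈ cs, conc C

/-- α̂(c) = { Σ(w) | w ∈ c }. -/
def alphaHat (c : Set (List S)) : Set (Finset S) :=
  {C | ∃ w ∈ c, w.toFinset = C}

lemma toFinset_eq_of_mem_permWords {C : Finset S} {w : List S} (h : w ∈ permWords C) :
    w.toFinset = C := by
  ext a
  simp only [List.mem_toFinset, ← List.count_pos_iff, h a]
  split <;> simp_all

lemma Finset.toList_mem_permWords (C : Finset S) : C.toList ∈ permWords C := fun a => by
  split_ifs with ha
  · exact List.count_eq_one_of_mem C.nodup_toList (C.mem_toList.mpr ha)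
  · exact List.count_eq_zero.mpr (mt C.mem_toList.mp ha)

lemma alphaHat_permWords (C : Finset S) : alphaHat (permWords C) = {C} :=
  Set.eq_singleton_iff_unique_mem.mpr
    ⟨⟨C.toList, C.toList_mem_permWords, C.toList_toFinset⟩,
      fun _ ⟨_, hw, hC'⟩ => hC' ▸ toFinset_eq_of_mem_permWords hw⟩

lemma alphaHat_biUnion {ι : Type*} (s : Set ι) (c : ι → Set (List S)) :
    alphaHat (⋃ i ∈ s, c i) = ⋃ i ∈ s, alphaHat (c i) :=
  Set.image_iUnion₂ _ _

lemma conc_eq_biUnion (C : Finset S) : conc C = ⋃ C' ∈ Set.Iic C, permWords C' := by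
  ext w
  simp [conc]

lemma alphaHat_conc (C : Finset S) : alphaHat (conc C) = Set.Iic C := by
  simp only [conc_eq_biUnion, alphaHat_biUnion, alphaHat_permWords, Set.biUnion_of_singleton]

/-- α̂(γ̃(cs)) equals the subset-closure of cs. -/
theorem stmt_15 (cs : Set (Finset S)) :
    alphaHat (concTilde cs) = {C' | ∃ C ∈ cs, C' ⊆ C} := by
  ext D
  simp [concTilde, alphaHat_biUnion, alphaHat_conc]
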